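/- arXiv:2605.05551 — 3 statements merged into one kernel-verified Lean document; each statement's English description precedes it below -/
import Mathlib

section
/- If α > 0, a₁ > 0 and a₂ is a real number with 0 ≤ a₂ < a₁, then both roots of the quadratic equation (α + a₁)·λ² − a₂·λ − α = 0 have modulus strictly less than 1. -/
/-! If `‖λ‖ ≥ 1`, the triangle inequality applied to `(α + a₁) λ² = a₂ λ + α` gives
`(α + a₁) ‖λ‖² ≤ (a₂ + α) ‖λ‖²`, which contradicts `a₂ < a₁`. -/

theorem norm_lt_one_of_mul_sq_eq_add {𝕜 : Type*} [NormedDivisionRing 𝕜] {p q r z : 𝕜}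
    (hz : p * z ^ 2 = q * z + r) (hpqr : ‖q‖ + ‖r‖ < ‖p‖) : ‖z‖ < 1 := by
  by_contra! hz1
  have hsq : ‖z‖ ≤ ‖z‖ ^ 2 := by nlinarith
  have hpos : 0 < ‖z‖ ^ 2 := by positivity
  have : ‖p‖ * ‖z‖ ^ 2 ≤ (‖q‖ + ‖r‖) * ‖z‖ ^ 2 :=
    calc ‖p‖ * ‖z‖ ^ 2 = ‖q * z + r‖ := by rw [← hz, norm_mul, norm_pow]
      _ ≤ ‖q‖ * ‖z‖ + ‖r‖ := (norm_add_le _ _).trans_eq (by rw [norm_mul])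
      _ ≤ (‖q‖ + ‖r‖) * ‖z‖ ^ 2 := by nlinarith [norm_nonneg q, norm_nonneg r]
  nlinarith

theorem stmt_1_general (α a₁ a₂ : ℝ) (hα : 0 < α) (ha₂ : 0 ≤ a₂) (h : a₂ < a₁) :
    ∀ lam : ℂ, ((α : ℂ) + a₁) * lam ^ 2 - (a₂ : ℂ) * lam - (α : ℂ) = 0 →
      ‖lam‖ < 1 := by
  intro lam hroot
  refine norm_lt_one_of_mul_sq_eq_add (p := (α : ℂ) + a₁) (q := a₂) (r := α)
    (by linear_combination hroot) ?_
  rw [← Complex.ofReal_add, Complex.norm_real, Complex.norm_real, Complex.norm_real,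
    Real.norm_of_nonneg ha₂, Real.norm_of_nonneg hα.le, Real.norm_of_nonneg (by linarith)]
  linarith

/-- If `α > 0`, `a₁ > 0` and `0 ≤ a₂ < a₁`, then both (complex) roots of
`(α + a₁)·λ² − a₂·λ − α = 0` have modulus strictly less than 1. -/
theorem stmt_1 (α a₁ a₂ : ℝ) (hα : 0 < α) (ha₁ : 0 < a₁) (ha₂ : 0 ≤ a₂) (h : a₂ < a₁) :
    ∀ lam : ℂ, ((α : ℂ) + a₁) * lam ^ 2 - (a₂ : ℂ) * lam - (α : ℂ) = 0 →
      ‖lam‖ < 1 :=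
  stmt_1_general α a₁ a₂ hα ha₂ h
end

section
/- Let A₁ ∈ ℝ^{p×n} have full column rank, A₂ ∈ ℝ^{q×n}, and suppose A₁ᵀA₁ − A₂ᵀA₂ is positive definite. For any α > 0, every eigenvalue of the 2n×2n block matrix W = [[P⁻¹R, P⁻¹S], [I, 0]], where P = αI + A₁ᵀA₁, R = A₂ᵀA₂, S = αI, has modulus strictly less than 1; i.e., the spectral radius of W is less than 1. -/
/-! If `W (x, y) = λ (x, y)` with `(x, y) ≠ 0`, then `x = λ y`, `y ≠ 0` and `λ R y + S y = λ² P y`.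
Pairing with `y`, the numbers `r = y*Ry ≥ 0`, `s = y*Sy = α‖y‖² > 0` and `t = y*A₁ᵀA₁y` are real,
satisfy `λ r + s = λ² (s + t)`, and `r < t` by positive definiteness of `A₁ᵀA₁ − A₂ᵀA₂`.
Taking moduli gives `|λ|² (s + t) ≤ |λ| r + s`, which is impossible when `|λ| ≥ 1`. -/

open Matrix
open scoped ComplexOrder

namespace Matrix

variable {ι : Type*} [Fintype ι]

theorem re_star_dotProduct_map_ofReal_mulVec (M : Matrix ι ι ℝ) (z : ι → ℂ) :
    (star z ⬝ᵥ (M.map Complex.ofReal *ᵥ z)).re =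
      (fun i ↦ (z i).re) ⬝ᵥ (M *ᵥ fun i ↦ (z i).re) +
        (fun i ↦ (z i).im) ⬝ᵥ (M *ᵥ fun i ↦ (z i).im) := by
  simp only [dotProduct, mulVec, Complex.re_sum, Finset.mul_sum, ← Finset.sum_add_distrib]
  refine Finset.sum_congr rfl fun i _ ↦ Finset.sum_congr rfl fun j _ ↦ ?_
  simp only [Pi.star_apply, map_apply, Complex.mul_re, Complex.mul_im, Complex.star_def,
    Complex.conj_re, Complex.conj_im, Complex.ofReal_re, Complex.ofReal_im]
  ring

theorem IsHermitian.star_dotProduct_map_ofReal_mulVec {M : Matrix ι ι ℝ} (hM : M.IsHermitian)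
    (z : ι → ℂ) :
    star z ⬝ᵥ (M.map Complex.ofReal *ᵥ z) =
      ((fun i ↦ (z i).re) ⬝ᵥ (M *ᵥ fun i ↦ (z i).re) +
        (fun i ↦ (z i).im) ⬝ᵥ (M *ᵥ fun i ↦ (z i).im) : ℝ) := by
  have hMc : (M.map Complex.ofReal).IsHermitian :=
    hM.map _ fun x ↦ (Complex.conj_ofReal x).symm
  exact Complex.ext (by simpa using re_star_dotProduct_map_ofReal_mulVec M z)
    (by simpa using hMc.im_star_dotProduct_mulVec_self z)

theorem PosSemidef.map_ofReal {M : Matrix ι ι ℝ} (hM : M.PosSemidef) :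
    (M.map Complex.ofReal).PosSemidef := by
  refine posSemidef_iff_dotProduct_mulVec.mpr
    ⟨hM.isHermitian.map _ fun x ↦ (Complex.conj_ofReal x).symm, fun z ↦ ?_⟩
  rw [hM.isHermitian.star_dotProduct_map_ofReal_mulVec, Complex.zero_le_real]
  exact add_nonneg (hM.dotProduct_mulVec_nonneg _) (hM.dotProduct_mulVec_nonneg _)

theorem PosDef.map_ofReal {M : Matrix ι ι ℝ} (hM : M.PosDef) :
    (M.map Complex.ofReal).PosDef := by
  refine posDef_iff_dotProduct_mulVec.mpr
    ⟨hM.isHermitian.map _ fun x ↦ (Complex.conj_ofReal x).symm, fun z hz ↦ ?_⟩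
  rw [hM.isHermitian.star_dotProduct_map_ofReal_mulVec, Complex.zero_lt_real]
  have hre_or_him : (fun i ↦ (z i).re) ≠ 0 ∨ (fun i ↦ (z i).im) ≠ 0 := by
    by_contra! h
    exact hz (funext fun i ↦ Complex.ext (congrFun h.1 i) (congrFun h.2 i))
  rcases hre_or_him with h | h
  · exact add_pos_of_pos_of_nonneg (hM.dotProduct_mulVec_pos h)
      (hM.posSemidef.dotProduct_mulVec_nonneg _)
  · exact add_pos_of_nonneg_of_pos (hM.posSemidef.dotProduct_mulVec_nonneg _)
      (hM.dotProduct_mulVec_pos h)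

theorem exists_quadratic_eigenvector_of_fromBlocks_mulVec {K : Type*} [Field K] [DecidableEq ι]
    {P R S : Matrix ι ι K} (hP : IsUnit P) {lam : K} {v : ι ⊕ ι → K} (hv : v ≠ 0)
    (hW : fromBlocks (P⁻¹ * R) (P⁻¹ * S) 1 0 *ᵥ v = lam • v) :
    ∃ y ≠ 0, lam • (R *ᵥ y) + S *ᵥ y = lam ^ 2 • (P *ᵥ y) := by
  set x : ι → K := v ∘ Sum.inl
  set y : ι → K := v ∘ Sum.inr
  have hv_eq : v = Sum.elim x y := funext fun s ↦ by cases s <;> rfl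
  rw [hv_eq, fromBlocks_mulVec] at hW
  have hx : x = lam • y := funext fun i ↦ by simpa using congrFun hW (Sum.inr i)
  have htop : (P⁻¹ * R) *ᵥ x + (P⁻¹ * S) *ᵥ y = lam • x :=
    funext fun i ↦ by simpa using congrFun hW (Sum.inl i)
  refine ⟨y, fun hy ↦ hv ?_, ?_⟩
  · rw [hv_eq, hx, hy, smul_zero, Sum.elim_zero_zero]
  · have hPP : P * P⁻¹ = 1 := mul_nonsing_inv P ((isUnit_iff_isUnit_det P).mp hP)
    have := congrArg (P *ᵥ ·) htop
    simp only [mulVec_add, mulVec_mulVec, ← mul_assoc, hPP, one_mul, mulVec_smul, hx] at this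
    rw [this, smul_smul, sq]

end Matrix

theorem norm_lt_one_of_mul_add_eq_sq_mul {lam r s t : ℂ} (hr : 0 ≤ r) (hs : 0 < s) (hrt : r < t)
    (h : lam * r + s = lam ^ 2 * (s + t)) : ‖lam‖ < 1 := by
  obtain ⟨r, hr₀, rfl⟩ := RCLike.nonneg_iff_exists_ofReal.mp hr
  obtain ⟨s, hs₀, rfl⟩ := RCLike.pos_iff_exists_ofReal.mp hs
  obtain ⟨t, -, rfl⟩ := RCLike.nonneg_iff_exists_ofReal.mp (hr.trans hrt.le)
  rw [RCLike.ofReal_lt_ofReal] at hrt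
  -- `RCLike.ofReal` on `ℂ` is `Complex.ofReal` only up to unfolding
  change lam * (r : ℂ) + s = lam ^ 2 * (s + t) at h
  have hnorm : ‖lam‖ ^ 2 * (s + t) ≤ ‖lam‖ * r + s := by
    calc ‖lam‖ ^ 2 * (s + t) = ‖lam * r + s‖ := by
          rw [h, norm_mul, norm_pow, ← Complex.ofReal_add, Complex.norm_of_nonneg (by linarith)]
      _ ≤ ‖lam‖ * r + s := by
          grw [norm_add_le, norm_mul, Complex.norm_of_nonneg hr₀, Complex.norm_of_nonneg hs₀.le]
  by_contra! hlam
  have ht₀ : 0 ≤ t := hr₀.trans hrt.le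
  have hs_le : s ≤ ‖lam‖ ^ 2 * s := le_mul_of_one_le_left hs₀.le (one_le_pow₀ hlam)
  have ht_le : ‖lam‖ * t ≤ ‖lam‖ ^ 2 * t := by
    rw [sq, mul_assoc]; exact le_mul_of_one_le_left (by positivity) hlam
  have hr_lt : ‖lam‖ * r < ‖lam‖ * t := mul_lt_mul_of_pos_left hrt (by linarith)
  linarith

theorem stmt_8_general (p q n : ℕ) (A₁ : Matrix (Fin p) (Fin n) ℝ) (A₂ : Matrix (Fin q) (Fin n) ℝ)
    (hpd : (A₁ᵀ * A₁ - A₂ᵀ * A₂).PosDef)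
    (α : ℝ) (hα : 0 < α)
    (P R S : Matrix (Fin n) (Fin n) ℝ)
    (hPdef : P = α • (1 : Matrix (Fin n) (Fin n) ℝ) + A₁ᵀ * A₁)
    (hRdef : R = A₂ᵀ * A₂)
    (hSdef : S = α • (1 : Matrix (Fin n) (Fin n) ℝ)) :
    ∀ lam : ℂ,
      (∃ v : Fin n ⊕ Fin n → ℂ, v ≠ 0 ∧
        (Matrix.fromBlocks
            ((P.map Complex.ofReal)⁻¹ * R.map Complex.ofReal)
            ((P.map Complex.ofReal)⁻¹ * S.map Complex.ofReal)
            (1 : Matrix (Fin n) (Fin n) ℂ) 0) *ᵥ v = lam • v) →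
      ‖lam‖ < 1 := by
  rintro lam ⟨v, hv, hWv⟩
  have hgram {m : ℕ} (B : Matrix (Fin m) (Fin n) ℝ) : (Bᵀ * B).PosSemidef := by
    simpa using posSemidef_conjTranspose_mul_self B
  have hS : S.PosDef := hSdef ▸ PosDef.one.smul hα
  have hP : P.PosDef := hPdef ▸ hSdef ▸ hS.add_posSemidef (hgram A₁)
  obtain ⟨y, hy, hquad⟩ :=
    exists_quadratic_eigenvector_of_fromBlocks_mulVec hP.map_ofReal.isUnit hv hWv
  refine norm_lt_one_of_mul_add_eq_sq_mul (r := star y ⬝ᵥ (R.map Complex.ofReal *ᵥ y))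
    (s := star y ⬝ᵥ (S.map Complex.ofReal *ᵥ y))
    (t := star y ⬝ᵥ ((A₁ᵀ * A₁).map Complex.ofReal *ᵥ y)) ?_ ?_ ?_ ?_
  · exact (hRdef ▸ hgram A₂).map_ofReal.dotProduct_mulVec_nonneg y
  · exact hS.map_ofReal.dotProduct_mulVec_pos hy
  · simpa [hRdef, Matrix.map_sub, sub_mulVec] using hpd.map_ofReal.dotProduct_mulVec_pos hy
  · have hPS : P = S + A₁ᵀ * A₁ := hSdef ▸ hPdef
    simpa [hPS, Matrix.map_add, add_mulVec, dotProduct_add, dotProduct_smul, mul_add] using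
      congrArg (star y ⬝ᵥ ·) hquad

/-- Main convergence theorem for the DS iteration: if `A₁` has full column rank and
`A₁ᵀA₁ − A₂ᵀA₂` is positive definite, then for any `α > 0` every (complex) eigenvalue
of `W = [[P⁻¹R, P⁻¹S], [I, 0]]`, with `P = αI + A₁ᵀA₁`, `R = A₂ᵀA₂`, `S = αI`, has
modulus strictly less than 1. -/
theorem stmt_8 (p q n : ℕ) (A₁ : Matrix (Fin p) (Fin n) ℝ) (A₂ : Matrix (Fin q) (Fin n) ℝ)
    (hrank : A₁.rank = n)
    (hpd : (A₁ᵀ * A₁ - A₂ᵀ * A₂).PosDef)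
    (α : ℝ) (hα : 0 < α)
    (P R S : Matrix (Fin n) (Fin n) ℝ)
    (hPdef : P = α • (1 : Matrix (Fin n) (Fin n) ℝ) + A₁ᵀ * A₁)
    (hRdef : R = A₂ᵀ * A₂)
    (hSdef : S = α • (1 : Matrix (Fin n) (Fin n) ℝ)) :
    ∀ lam : ℂ,
      (∃ v : Fin n ⊕ Fin n → ℂ, v ≠ 0 ∧
        (Matrix.fromBlocks
            ((P.map Complex.ofReal)⁻¹ * R.map Complex.ofReal)
            ((P.map Complex.ofReal)⁻¹ * S.map Complex.ofReal)
            (1 : Matrix (Fin n) (Fin n) ℂ) 0) *ᵥ v = lam • v) →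
      ‖lam‖ < 1 :=
  stmt_8_general p q n A₁ A₂ hpd α hα P R S hPdef hRdef hSdef
end

section
/- Let α > 0 and a₁ > a₂ ≥ 0. Every complex root λ of (α + a₁)λ² − a₂λ − α = 0 satisfies |λ| ≤ max of the two real roots' absolute values, and in fact both roots are real with absolute value less than 1. -/
/-!
The quadratic `(α + a₁)λ² − a₂λ − α` has real coefficients and discriminant
`a₂² + 4α(α + a₁) > 0`, so the quadratic formula exhibits both of its complex roots as real
numbers. Its values at `0` and `±1` are `-α < 0` and `a₁ ∓ a₂ > 0`; by convexity a root `x`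
with `|x| ≥ 1` would force the value at `±1`, which lies between `0` and `x`, to be negative.
-/

theorem exists_ofReal_eq_of_quadratic_eq_zero {a b c : ℝ} (ha : a ≠ 0)
    (hd : 0 ≤ discrim a b c) {z : ℂ} (hz : (a : ℂ) * (z * z) + b * z + c = 0) :
    ∃ x : ℝ, z = x ∧ a * (x * x) + b * x + c = 0 := by
  set s := Real.sqrt (discrim a b c)
  have hs : discrim (a : ℂ) b c = (s : ℂ) * s := by
    rw [← Complex.ofReal_mul, Real.mul_self_sqrt hd, discrim, discrim]
    push_cast
    ring
  have hroot : ∃ x : ℝ, z = x := by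
    rcases (quadratic_eq_zero_iff (Complex.ofReal_ne_zero.2 ha) hs z).1 hz with h | h
    · exact ⟨(-b + s) / (2 * a), by rw [h]; push_cast; ring⟩
    · exact ⟨(-b - s) / (2 * a), by rw [h]; push_cast; ring⟩
  obtain ⟨x, rfl⟩ := hroot
  exact ⟨x, rfl, by exact_mod_cast hz⟩

theorem abs_lt_one_of_quadratic_eq_zero {a b c x : ℝ} (hc : c < 0) (hone : 0 < a + b + c)
    (hneg_one : 0 < a - b + c) (hx : a * (x * x) + b * x + c = 0) : |x| < 1 := by
  have ha : 0 < a := by linarith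
  rw [abs_lt]
  constructor
  · by_contra! hle
    nlinarith [mul_nonneg ha.le (mul_nonneg (by linarith : 0 ≤ -x) (by linarith : 0 ≤ -x - 1))]
  · by_contra! hge
    nlinarith [mul_nonneg ha.le (mul_nonneg (by linarith : 0 ≤ x) (by linarith : 0 ≤ x - 1))]

/-- For `α > 0` and `a₁ > a₂ ≥ 0`, every complex root of
`(α + a₁)λ² − a₂λ − α = 0` is real and has absolute value less than 1. -/
theorem stmt_18 (α a₁ a₂ : ℝ) (hα : 0 < α) (ha₂ : 0 ≤ a₂) (h : a₂ < a₁) :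
    ∀ lam : ℂ, ((α : ℂ) + a₁) * lam ^ 2 - (a₂ : ℂ) * lam - (α : ℂ) = 0 →
      lam.im = 0 ∧ ‖lam‖ < 1 := by
  intro lam heq
  have hlead : α + a₁ ≠ 0 := by linarith
  have hdiscrim : 0 ≤ discrim (α + a₁) (-a₂) (-α) := by
    rw [discrim]
    nlinarith [sq_nonneg a₂]
  have hquad : ((α + a₁ : ℝ) : ℂ) * (lam * lam) + ((-a₂ : ℝ) : ℂ) * lam + ((-α : ℝ) : ℂ) = 0 := by
    push_cast
    linear_combination heq
  obtain ⟨x, rfl, hx⟩ := exists_ofReal_eq_of_quadratic_eq_zero hlead hdiscrim hquad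
  refine ⟨Complex.ofReal_im x, ?_⟩
  rw [Complex.norm_real, Real.norm_eq_abs]
  exact abs_lt_one_of_quadratic_eq_zero (by linarith) (by linarith) (by linarith) hx
end
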